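/- For every odd natural number k ≥ 1 and every real x ∈ [-1,1], the series ∑_{n=1}^∞ (-1)^{n+1} cos(nπx)/n^{k+1} converges absolutely and F_k(x) = 2·(-1)^{(k+1)/2} · π^{-(k+1)} · ∑_{n=1}^∞ (-1)^{n+1} cos(nπx)/n^{k+1}. -/

import Mathlib

open Polynomial Real
open scoped Nat

private lemma bFun_one' (x : ℝ) : bernoulliFun 1 x = x - 1/2 := by
  simp [bernoulliFun, Polynomial.bernoulli, Finset.sum_range_succ, _root_.bernoulli_one, _root_.bernoulli_zero]
  ring

/-- Representation of F k via Bernoulli polynomials. -/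
private lemma F_eval' (F : ℕ → Polynomial ℝ)
    (hF0 : F 0 = Polynomial.X)
    (hFd : ∀ k : ℕ, Polynomial.derivative (F (k + 1)) = F k)
    (hFi : ∀ k : ℕ, ∫ x in (-1 : ℝ)..1, (F (k + 1)).eval x = 0) :
    ∀ k : ℕ, ∀ x : ℝ,
      (F k).eval x = 2 ^ (k+1) / (k+1)! * bernoulliFun (k+1) ((x+1)/2) := by
  intro k
  induction k with
  | zero =>
    intro x
    rw [hF0, bFun_one']
    simp [Nat.factorial]
    ring
  | succ k ih =>
    set c : ℝ := 2 ^ (k+2) / (k+2)! with hc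
    set g : ℝ → ℝ := fun x => (F (k+1)).eval x - c * bernoulliFun (k+2) ((x+1)/2) with hg
    have haff : ∀ x : ℝ, HasDerivAt (fun y : ℝ => (y+1)/2) (1/2) x := fun x =>
      ((hasDerivAt_id x).add_const 1).div_const 2
    have hderiv : ∀ x : ℝ, HasDerivAt g 0 x := by
      intro x
      have h1 : HasDerivAt (fun y => (F (k+1)).eval y) ((F k).eval x) x := by
        simpa [hFd k] using (F (k+1)).hasDerivAt x
      have h3 := ((hasDerivAt_bernoulliFun (k+2) ((x+1)/2)).comp x (haff x)).const_mul c
      have harith : c * (((k:ℝ)+2) * bernoulliFun (k+1) ((x+1)/2) * (1/2))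
          = (F k).eval x := by
        rw [ih x, hc]
        have h2 : ((k+2)! : ℝ) = ((k:ℝ)+2) * (k+1)! := by
          rw [show k+2 = (k+1)+1 from rfl, Nat.factorial_succ]
          push_cast; ring
        have hne : ((k+1)! : ℝ) ≠ 0 := by positivity
        have hne2 : ((k:ℝ)+2) ≠ 0 := by positivity
        rw [h2]
        field_simp
        ring
      have h4 := h1.sub h3
      push_cast at h4
      rw [harith] at h4
      rw [sub_self] at h4
      exact h4
    have hconst : ∀ y : ℝ, g y = g 0 := fun y =>
      is_const_of_deriv_eq_zero (fun z => (hderiv z).differentiableAt)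
        (fun z => (hderiv z).deriv) y 0
    -- integral of the Bernoulli part vanishes
    have hint : ∫ x in (-1:ℝ)..1, bernoulliFun (k+2) ((x+1)/2) = 0 := by
      have hfe : (fun x : ℝ => bernoulliFun (k+2) ((x+1)/2))
          = fun x : ℝ => bernoulliFun (k+2) ((1/2)*x + 1/2) := by
        funext y; ring_nf
      rw [hfe, intervalIntegral.integral_comp_mul_add (bernoulliFun (k+2))
        (by norm_num : (1/2:ℝ) ≠ 0) (1/2)]
      norm_num [integral_bernoulliFun_eq_zero (show k+2 ≠ 0 by omega)]
    have hiF : IntervalIntegrable (fun x => (F (k+1)).eval x) MeasureTheory.volume (-1) 1 :=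
      (Polynomial.continuous _).intervalIntegrable _ _
    have hiB : IntervalIntegrable (fun x : ℝ => c * bernoulliFun (k+2) ((x+1)/2))
        MeasureTheory.volume (-1) 1 := by
      apply Continuous.intervalIntegrable
      exact continuous_const.mul ((Polynomial.continuous _).comp (by continuity))
    have hzero : ∫ x in (-1:ℝ)..1, g x = 0 := by
      rw [hg]
      rw [intervalIntegral.integral_sub hiF hiB, hFi k,
        intervalIntegral.integral_const_mul, hint]
      ring
    have hg0 : g 0 = 0 := by
      have h2 : ∫ x in (-1:ℝ)..1, g x = 2 * g 0 := by
        rw [intervalIntegral.integral_congr (fun y _ => hconst y)]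
        simp
        norm_num
      rw [hzero] at h2
      linarith
    intro x
    have := hconst x
    rw [hg0] at this
    have hx0 : (F (k+1)).eval x = c * bernoulliFun (k+2) ((x+1)/2) := by
      have : g x = 0 := this
      rw [hg] at this
      linarith
    simpa [hc] using hx0

set_option maxHeartbeats 1000000 in
theorem stmt6 (F : ℕ → Polynomial ℝ)
    (hF0 : F 0 = Polynomial.X)
    (hFd : ∀ k : ℕ, Polynomial.derivative (F (k + 1)) = F k)
    (hFi : ∀ k : ℕ, ∫ x in (-1 : ℝ)..1, (F (k + 1)).eval x = 0)
    (k : ℕ) (hk : Odd k) (hk1 : 1 ≤ k) (x : ℝ) (hx : x ∈ Set.Icc (-1 : ℝ) 1) :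
    Summable (fun n : ℕ =>
        |(-1 : ℝ) ^ (n + 1 + 1) * Real.cos ((n + 1) * Real.pi * x) / (n + 1) ^ (k + 1)|) ∧
      (F k).eval x = 2 * (-1 : ℝ) ^ ((k + 1) / 2) / Real.pi ^ (k + 1) *
        ∑' n : ℕ, (-1 : ℝ) ^ (n + 1 + 1) * Real.cos ((n + 1) * Real.pi * x) / (n + 1) ^ (k + 1) := by
  obtain ⟨m', rfl⟩ := hk
  set m : ℕ := m' + 1 with hm
  have hk2 : 2 * m' + 1 + 1 = 2 * m := by omega
  obtain ⟨hx1, hx2⟩ := hx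
  have ht : (x+1)/2 ∈ Set.Icc (0:ℝ) 1 := ⟨by linarith, by linarith⟩
  -- the Mathlib Fourier series of Bernoulli polynomials
  have hS := hasSum_one_div_nat_pow_mul_cos (k := m) (by omega) ht
  -- rewrite the cosine
  have hcos : ∀ n : ℕ, Real.cos (2 * π * n * ((x+1)/2)) = (-1:ℝ)^n * Real.cos (n * π * x) := by
    intro n
    have : 2 * π * n * ((x+1)/2) = (n:ℝ) * π * x + n * π := by ring
    rw [this, Real.cos_add_nat_mul_pi]
  have hS' : HasSum (fun n : ℕ => (-1:ℝ)^n * Real.cos (n * π * x) / (n:ℝ) ^ (2*m))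
      ((-1 : ℝ) ^ (m + 1) * (2 * π) ^ (2 * m) / 2 / (2 * m)! *
        bernoulliFun (2*m) ((x+1)/2)) := by
    have hfe2 : (fun n : ℕ => 1 / (n:ℝ) ^ (2 * m) * Real.cos (2 * π * n * ((x+1)/2)))
        = fun n : ℕ => (-1:ℝ)^n * Real.cos (n * π * x) / (n:ℝ) ^ (2*m) := by
      funext n
      rw [hcos n]
      ring
    rw [hfe2] at hS
    exact hS
  -- shift index and negate
  set S : ℝ := (-1 : ℝ) ^ (m + 1) * (2 * π) ^ (2 * m) / 2 / (2 * m)! *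
      bernoulliFun (2*m) ((x+1)/2) with hSdef
  have hS2 : HasSum (fun n : ℕ => (-1:ℝ)^(n+1) * Real.cos ((n+1) * π * x) / ((n:ℝ)+1) ^ (2*m)) S := by
    have h := (hasSum_nat_add_iff' (f := fun n : ℕ => (-1:ℝ)^n * Real.cos (n * π * x) / (n:ℝ) ^ (2*m)) 1).mpr hS'
    have hval : S - ∑ i ∈ Finset.range 1, ((-1:ℝ)^i * Real.cos (i * π * x) / (i:ℝ) ^ (2*m)) = S := by
      rw [Finset.sum_range_one]
      simp [zero_pow (show 2*m ≠ 0 by omega)]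
    rw [hval] at h
    have hfe3 : (fun n : ℕ => (-1:ℝ)^(n+1) * Real.cos ((↑(n+1) : ℝ) * π * x) / ((↑(n+1) : ℝ)) ^ (2*m))
        = fun n : ℕ => (-1:ℝ)^(n+1) * Real.cos (((n:ℝ)+1) * π * x) / ((n:ℝ)+1) ^ (2*m) := by
      funext n
      push_cast
      ring_nf
    rw [hfe3] at h
    exact h
  have hS3 : HasSum (fun n : ℕ => (-1:ℝ)^(n+1+1) * Real.cos ((n+1) * π * x) / ((n:ℝ)+1) ^ (2*m)) (-S) := by
    have h := hS2.neg
    have hfe4 : (fun n : ℕ => -((-1:ℝ)^(n+1) * Real.cos (((n:ℝ)+1) * π * x) / ((n:ℝ)+1) ^ (2*m)))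
        = fun n : ℕ => (-1:ℝ)^(n+1+1) * Real.cos (((n:ℝ)+1) * π * x) / ((n:ℝ)+1) ^ (2*m) := by
      funext n
      ring
    rw [hfe4] at h
    exact h
  -- the target function equals the one in hS3
  have hfun : (fun n : ℕ => (-1 : ℝ) ^ (n + 1 + 1) * Real.cos ((↑n + 1) * Real.pi * x) / (↑n + 1) ^ (2*m'+1 + 1))
      = fun n : ℕ => (-1:ℝ)^(n+1+1) * Real.cos ((n+1) * π * x) / ((n:ℝ)+1) ^ (2*m) := by
    funext n
    rw [hk2]
  -- summability of absolute values
  have hsum_abs : Summable (fun n : ℕ =>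
      |(-1 : ℝ) ^ (n + 1 + 1) * Real.cos ((↑n + 1) * Real.pi * x) / (↑n + 1) ^ (2*m'+1 + 1)|) := by
    apply Summable.of_nonneg_of_le (f := fun n : ℕ => 1 / ((n:ℝ)+1)^2)
      (fun n => abs_nonneg _)
    · intro n
      rw [abs_div, abs_mul, abs_pow, abs_neg, abs_one, one_pow, one_mul]
      have h1 : (0:ℝ) < ((n:ℝ)+1)^(2*m'+1+1) := by positivity
      have h2 : |((n:ℝ)+1) ^ (2*m'+1+1)| = ((n:ℝ)+1)^(2*m'+1+1) := abs_of_pos h1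
      rw [h2]
      have h3 : ((n:ℝ)+1)^2 ≤ ((n:ℝ)+1)^(2*m'+1+1) := by
        apply pow_le_pow_right₀ (by linarith [Nat.cast_nonneg (α := ℝ) n])
        omega
      calc |Real.cos ((↑n + 1) * Real.pi * x)| / ((n:ℝ)+1)^(2*m'+1+1)
          ≤ 1 / ((n:ℝ)+1)^(2*m'+1+1) :=
            (div_le_div_iff_of_pos_right h1).mpr (Real.abs_cos_le_one _)
          _ ≤ 1 / ((n:ℝ)+1)^2 :=
            one_div_le_one_div_of_le (by positivity) h3
    · have h := (Real.summable_one_div_nat_pow (p := 2)).mpr (by norm_num)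
      have := (summable_nat_add_iff (f := fun n : ℕ => 1 / (n:ℝ)^2) 1).mpr h
      convert this using 2 with n
      · rfl
      push_cast
      ring_nf
  refine ⟨hsum_abs, ?_⟩
  -- compute tsum
  have htsum : ∑' n : ℕ, (-1 : ℝ) ^ (n + 1 + 1) * Real.cos ((↑n + 1) * Real.pi * x) / (↑n + 1) ^ (2*m'+1 + 1)
      = -S := by
    rw [hfun]
    exact hS3.tsum_eq
  rw [htsum]
  -- the left side via Bernoulli representation
  have hFeval := F_eval' F hF0 hFd hFi (2*m'+1) x
  rw [hFeval]
  rw [hSdef]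
  have hdiv : (2*m'+1+1)/2 = m := by omega
  rw [hdiv, hk2]
  have hπ : (0:ℝ) < π := Real.pi_pos
  have hπne : (π:ℝ) ^ (2*m) ≠ 0 := by positivity
  have hsq : ((-1:ℝ))^m * ((-1:ℝ))^m = 1 := by
    rw [← pow_add, ← two_mul, pow_mul]
    norm_num
  set B : ℝ := bernoulliFun (2*m) ((x+1)/2) with hB
  have hm1 : -((-1 : ℝ) ^ (m + 1) * (2 * π) ^ (2 * m) / 2 / (2 * m)! * B)
      = (-1:ℝ)^m * (2 * π) ^ (2 * m) / 2 / (2 * m)! * B := by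
    rw [pow_succ]; ring
  rw [hm1, mul_pow]
  have key : 2 * (-1:ℝ)^m / π^(2*m) * ((-1:ℝ)^m * ((2:ℝ)^(2*m) * π^(2*m)) / 2 / (2*m)! * B)
      = 2^(2*m) / ((2*m)! : ℝ) * B := by
    calc 2 * (-1:ℝ)^m / π^(2*m) * ((-1:ℝ)^m * ((2:ℝ)^(2*m) * π^(2*m)) / 2 / (2*m)! * B)
        = ((-1:ℝ)^m * (-1:ℝ)^m) * (π^(2*m) / π^(2*m)) * ((2:ℝ)^(2*m) / (2*m)! * B) := by
          ring
      _ = 2^(2*m) / ((2*m)! : ℝ) * B := by rw [hsq, div_self hπne]; ring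
  exact key.symm
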